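/- arXiv:1712.05360 — 3 statements merged into one kernel-verified Lean document; each statement's English description precedes it below -/
import Mathlib

section
/- Fix α ∈ ℤ with α ≠ 0 and ν > 0, and let λ ∈ ℂ with Re λ > 0. Set μ = ν^{-1/2}√(λ + α²ν), where the square root is chosen with positive real part. Then the function G(y,z) = (1/(2νμ))(e^{-μ|y-z|} + e^{-μ(y+z)}) + (α(α+μ)/(λμ)) e^{-μ(y+z)}, for y, z ≥ 0, satisfies, for each fixed y > 0: (λ - ν(∂_z² - α²)) G(y,·) = 0 on (0,y) ∪ (y,∞), the boundary condition ν(∂_z + α)G(y,z)|_{z=0} = 0, the continuity [G(y,·)]_{z=y} = 0, and the jump condition ν[∂_z G(y,·)]_{z=y} = -1 (i.e. the derivative from above minus the derivative from below equals -1/ν). -/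
open Filter Set Topology

/-!
On each side of `z = y` the kernel is a combination of `e^{μz}` and `e^{-μz}`, so it solves
`f'' = μ² f`, and `ν μ² = λ + α² ν` turns this into the resolvent equation. Only the term
`a e^{-μ|y-z|}` is not smooth at `z = y`: its one-sided derivatives there are `∓ μ a`, giving the
jump `-2μa = -1/ν`. The coefficient of `e^{-μ(y+z)}` is chosen so that the boundary condition
reduces to `α (α² - μ²) = -λ α / ν`.
-/

noncomputable section

def expPair (μ A B : ℂ) (z : ℝ) : ℂ :=
  A * Complex.exp (μ * z) + B * Complex.exp (-μ * z)

lemma hasDerivAt_expPair (μ A B : ℂ) (z : ℝ) :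
    HasDerivAt (expPair μ A B) (expPair μ (μ * A) (-μ * B) z) z := by
  have hexp (c : ℂ) : HasDerivAt (fun t : ℝ => Complex.exp (c * t)) (Complex.exp (c * z) * c) z :=
    (((hasDerivAt_id (z : ℂ)).const_mul c).cexp.comp_ofReal).congr_deriv (by simp)
  exact (((hexp μ).const_mul A).add ((hexp (-μ)).const_mul B)).congr_deriv (by rw [expPair]; ring)

lemma deriv_expPair (μ A B : ℂ) : deriv (expPair μ A B) = expPair μ (μ * A) (-μ * B) :=
  funext fun z => (hasDerivAt_expPair μ A B z).deriv

lemma deriv_deriv_expPair (μ A B : ℂ) (z : ℝ) :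
    deriv (deriv (expPair μ A B)) z = μ ^ 2 * expPair μ A B z := by
  simp only [deriv_expPair, expPair]
  ring

lemma continuous_expPair (μ A B : ℂ) : Continuous (expPair μ A B) := by
  unfold expPair
  fun_prop

lemma deriv_deriv_eq_of_eqOn_expPair {f : ℝ → ℂ} {s : Set ℝ} {μ A B : ℂ} {z : ℝ}
    (hs : IsOpen s) (hf : EqOn f (expPair μ A B) s) (hz : z ∈ s) :
    deriv (deriv f) z = μ ^ 2 * f z := by
  have hfz : f =ᶠ[𝓝 z] expPair μ A B := eventuallyEq_of_mem (hs.mem_nhds hz) hf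
  rw [hfz.deriv.deriv_eq, hfz.eq_of_nhds, deriv_deriv_expPair]

lemma tendsto_deriv_of_eqOn_expPair {f : ℝ → ℂ} {s : Set ℝ} {μ A B : ℂ} {y : ℝ}
    {l : Filter ℝ} (hl : l ≤ 𝓝 y) (hs : IsOpen s) (hf : EqOn f (expPair μ A B) s) (hsl : s ∈ l) :
    Tendsto (deriv f) l (𝓝 (deriv (expPair μ A B) y)) := by
  have hderiv : deriv (expPair μ A B) =ᶠ[l] deriv f := mem_of_superset hsl fun x hx =>
    (eventuallyEq_of_mem (hs.mem_nhds hx) hf).deriv_eq.symm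
  rw [deriv_expPair] at hderiv ⊢
  exact (((continuous_expPair _ _ _).tendsto y).mono_left hl).congr' hderiv

def halfLineKernel (μ a b : ℂ) (y z : ℝ) : ℂ :=
  a * (Complex.exp (-μ * (|y - z| : ℝ)) + Complex.exp (-μ * (y + z)))
    + b * Complex.exp (-μ * (y + z))

section halfLineKernel

variable (μ a b : ℂ) {y : ℝ}

lemma halfLineKernel_eqOn_Iic :
    EqOn (halfLineKernel μ a b y)
      (expPair μ (a * Complex.exp (-μ * y)) ((a + b) * Complex.exp (-μ * y))) (Iic y) := by
  intro z hz
  have hyz : |y - z| = y - z := abs_of_nonneg (sub_nonneg.mpr hz)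
  simp only [halfLineKernel, expPair, hyz, Complex.ofReal_sub, mul_assoc, ← Complex.exp_add]
  ring_nf

lemma halfLineKernel_eqOn_Ici :
    EqOn (halfLineKernel μ a b y)
      (expPair μ 0 (a * Complex.exp (μ * y) + (a + b) * Complex.exp (-μ * y))) (Ici y) := by
  intro z hz
  have hyz : |y - z| = z - y := abs_of_nonpos (sub_nonpos.mpr hz) |>.trans (neg_sub y z)
  simp only [halfLineKernel, expPair, hyz, Complex.ofReal_sub, zero_mul, zero_add, add_mul,
    mul_assoc, ← Complex.exp_add]
  ring_nf

lemma continuous_halfLineKernel : Continuous (halfLineKernel μ a b y) := by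
  unfold halfLineKernel
  fun_prop

lemma deriv_deriv_halfLineKernel {z : ℝ} (hz : z ≠ y) :
    deriv (deriv (halfLineKernel μ a b y)) z = μ ^ 2 * halfLineKernel μ a b y z := by
  rcases hz.lt_or_gt with hz | hz
  · exact deriv_deriv_eq_of_eqOn_expPair isOpen_Iio
      ((halfLineKernel_eqOn_Iic μ a b).mono Iio_subset_Iic_self) hz
  · exact deriv_deriv_eq_of_eqOn_expPair isOpen_Ioi
      ((halfLineKernel_eqOn_Ici μ a b).mono Ioi_subset_Ici_self) hz

lemma halfLineKernel_zero (hy : 0 ≤ y) :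
    halfLineKernel μ a b y 0 = (2 * a + b) * Complex.exp (-μ * y) := by
  rw [halfLineKernel_eqOn_Iic μ a b hy]
  simp only [expPair, Complex.ofReal_zero, mul_zero, Complex.exp_zero]
  ring

lemma deriv_halfLineKernel_zero (hy : 0 < y) :
    deriv (halfLineKernel μ a b y) 0 = -μ * b * Complex.exp (-μ * y) := by
  have hK : halfLineKernel μ a b y =ᶠ[𝓝 0] _ :=
    eventuallyEq_of_mem (Iio_mem_nhds hy) ((halfLineKernel_eqOn_Iic μ a b).mono Iio_subset_Iic_self)
  rw [hK.deriv_eq, deriv_expPair]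
  simp only [expPair, Complex.ofReal_zero, mul_zero, Complex.exp_zero]
  ring

lemma halfLineKernel_deriv_jump :
    ∃ Lp Lm : ℂ, Tendsto (deriv (halfLineKernel μ a b y)) (𝓝[>] y) (𝓝 Lp) ∧
      Tendsto (deriv (halfLineKernel μ a b y)) (𝓝[<] y) (𝓝 Lm) ∧ Lp - Lm = -2 * μ * a := by
  refine ⟨_, _, tendsto_deriv_of_eqOn_expPair nhdsWithin_le_nhds isOpen_Ioi
      ((halfLineKernel_eqOn_Ici μ a b).mono Ioi_subset_Ici_self) self_mem_nhdsWithin,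
    tendsto_deriv_of_eqOn_expPair nhdsWithin_le_nhds isOpen_Iio
      ((halfLineKernel_eqOn_Iic μ a b).mono Iio_subset_Iic_self) self_mem_nhdsWithin, ?_⟩
  have hexp : Complex.exp (μ * y) * Complex.exp (-μ * y) = 1 := by
    rw [← Complex.exp_add, neg_mul, add_neg_cancel, Complex.exp_zero]
  simp only [deriv_expPair, expPair]
  linear_combination (-2 * μ * a) * hexp

end halfLineKernel

end

theorem stokes_resolvent_kernel_general (α : ℤ) (ν : ℝ) (hν : 0 < ν)
    (lam μ : ℂ) (hlam : 0 < lam.re) (hμ : μ ^ 2 = (lam + (α : ℂ) ^ 2 * ν) / ν)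
    (hμre : 0 < μ.re) (y : ℝ) (hy : 0 < y) (G : ℝ → ℂ)
    (hG : ∀ z : ℝ, G z =
      (1 / (2 * ν * μ)) * (Complex.exp (-μ * (|y - z| : ℝ)) + Complex.exp (-μ * (y + z)))
        + ((α : ℂ) * ((α : ℂ) + μ) / (lam * μ)) * Complex.exp (-μ * (y + z))) :
    (∀ z : ℝ, z ∈ Set.Ioo 0 y ∪ Set.Ioi y →
        lam * G z - ν * (deriv (deriv G) z - (α : ℂ) ^ 2 * G z) = 0) ∧
    (ν : ℂ) * (deriv G 0 + (α : ℂ) * G 0) = 0 ∧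
    ContinuousAt G y ∧
    ∃ Lp Lm : ℂ,
      Tendsto (deriv G) (nhdsWithin y (Set.Ioi y)) (nhds Lp) ∧
      Tendsto (deriv G) (nhdsWithin y (Set.Iio y)) (nhds Lm) ∧
      (ν : ℂ) * (Lp - Lm) = -1 := by
  obtain rfl : G = halfLineKernel μ (1 / (2 * ν * μ)) (α * (α + μ) / (lam * μ)) y := funext hG
  have hν0 : (ν : ℂ) ≠ 0 := Complex.ofReal_ne_zero.mpr hν.ne'
  have hμ0 : μ ≠ 0 := fun h => by simp [h] at hμre
  have hlam0 : lam ≠ 0 := fun h => by simp [h] at hlam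
  have hμν : μ ^ 2 * ν = lam + (α : ℂ) ^ 2 * ν := (eq_div_iff hν0).mp hμ
  refine ⟨fun z hz => ?_, ?_, (continuous_halfLineKernel _ _ _).continuousAt, ?_⟩
  · have hzy : z ≠ y := by rcases hz with hz | hz <;> [exact hz.2.ne; exact hz.ne']
    rw [deriv_deriv_halfLineKernel _ _ _ hzy]
    linear_combination (-halfLineKernel μ _ _ y z) * hμν
  · rw [deriv_halfLineKernel_zero _ _ _ hy, halfLineKernel_zero _ _ _ hy.le]
    simp only [neg_mul]
    field_simp
    linear_combination (-α * Complex.exp (-(μ * y))) * hμν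
  · obtain ⟨Lp, Lm, hLp, hLm, hjump⟩ := halfLineKernel_deriv_jump μ (1 / (2 * ν * μ))
      (α * (α + μ) / (lam * μ)) (y := y)
    exact ⟨Lp, Lm, hLp, hLm, by rw [hjump]; field_simp⟩

/-- The explicit formula for the resolvent kernel of the Stokes problem
`(λ - νΔ_α)G = δ_y` on the half-line with boundary condition
`ν(∂_z + α)G|_{z=0} = 0`: it solves the resolvent equation away from `z = y`,
satisfies the boundary condition, is continuous across `z = y`, and its
derivative has the jump `ν[∂_z G]_{z=y} = -1`. -/
theorem stokes_resolvent_kernel (α : ℤ) (hα : α ≠ 0) (ν : ℝ) (hν : 0 < ν)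
    (lam μ : ℂ) (hlam : 0 < lam.re) (hμ : μ ^ 2 = (lam + (α : ℂ) ^ 2 * ν) / ν)
    (hμre : 0 < μ.re) (y : ℝ) (hy : 0 < y) (G : ℝ → ℂ)
    (hG : ∀ z : ℝ, G z =
      (1 / (2 * ν * μ)) * (Complex.exp (-μ * (|y - z| : ℝ)) + Complex.exp (-μ * (y + z)))
        + ((α : ℂ) * ((α : ℂ) + μ) / (lam * μ)) * Complex.exp (-μ * (y + z))) :
    (∀ z : ℝ, z ∈ Set.Ioo 0 y ∪ Set.Ioi y →
        lam * G z - ν * (deriv (deriv G) z - (α : ℂ) ^ 2 * G z) = 0) ∧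
    (ν : ℂ) * (deriv G 0 + (α : ℂ) * G 0) = 0 ∧
    ContinuousAt G y ∧
    ∃ Lp Lm : ℂ,
      Tendsto (deriv G) (nhdsWithin y (Set.Ioi y)) (nhds Lp) ∧
      Tendsto (deriv G) (nhdsWithin y (Set.Iio y)) (nhds Lm) ∧
      (ν : ℂ) * (Lp - Lm) = -1 :=
  stokes_resolvent_kernel_general α ν hν lam μ hlam hμ hμre y hy G hG
end

section
/- For every complex number w = a + ib with a ≥ 0 and b ∈ ℝ, and every s ≥ 0 with a·b·s ≥ 0, one has Re √((a+ib)² + is) ≥ a, where the square root is taken with nonnegative real part. -/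
/-- Elementary complex-analytic lemma: for `w = a + ib` with `a ≥ 0` and a
perturbation `is` with `a·b·s ≥ 0`, the square root of `(a+ib)² + is` with
nonnegative real part satisfies `Re √((a+ib)² + is) ≥ a`. -/
theorem re_sqrt_perturbed_square (a b s : ℝ) (ha : 0 ≤ a) (hs : 0 ≤ s)
    (habs : 0 ≤ a * b * s) (r : ℂ)
    (hr : r ^ 2 = ((a : ℂ) + (b : ℂ) * Complex.I) ^ 2 + (s : ℂ) * Complex.I)
    (hre : 0 ≤ r.re) :
    a ≤ r.re := by
  have h1 := congrArg Complex.re hr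
  have h2 := congrArg Complex.im hr
  simp [pow_two, Complex.mul_re, Complex.mul_im, Complex.add_re, Complex.add_im,
    Complex.I_re, Complex.I_im, Complex.ofReal_re, Complex.ofReal_im] at h1 h2
  set x := r.re
  set y := r.im
  by_contra h
  push_neg at h
  have hx2 : x ^ 2 < a ^ 2 := by nlinarith
  have hy2 : y ^ 2 = x ^ 2 - a ^ 2 + b ^ 2 := by nlinarith
  have hk : (x * y + y * x) ^ 2 = (a * b + b * a + s) ^ 2 := by rw [h2]
  have key : 4 * (x ^ 2 - a ^ 2) * (x ^ 2 + b ^ 2) = 4 * a * b * s + s ^ 2 := by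
    linear_combination hk - 4 * x ^ 2 * hy2
  have h0 : 4 * a * b * s + s ^ 2 ≤ 0 := by
    nlinarith [mul_nonneg (sub_pos.mpr hx2).le (by positivity : (0:ℝ) ≤ x ^ 2 + b ^ 2)]
  have hs2 : s ^ 2 ≤ 0 := by linarith
  have hs0 : s = 0 := by nlinarith [sq_nonneg s]
  have hb2 : 0 < x ^ 2 + b ^ 2 := by nlinarith [sq_nonneg y]
  nlinarith [key, mul_pos (sub_pos.mpr hx2) hb2]
end

section
/- Let α > 0 and let ω ∈ L¹(0,∞). Define φ(z) = ∫₀^z G₋(y,z)ω(y) dy + ∫_z^∞ G₊(y,z)ω(y) dy where G_±(y,z) = -(1/(2α))(e^{±α(z-y)} - e^{-α(y+z)}). Then φ satisfies φ(0) = 0 and the pointwise bounds |αφ(z)| ≤ ‖ω‖_{L¹} and |∂_z φ(z)| ≤ ‖ω‖_{L¹} for all z ≥ 0; moreover, if ω is continuous then φ'' - α²φ = ω on (0,∞). -/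
/-!
Both branches of the Green's function are `K(y, z) = -(e^{-α|z-y|} - e^{-α(y+z)}) / (2α)`,
so `φ = ∫₀^∞ K(·, z) ω` with `|K| ≤ 1/(2α)`. The kernel is Lipschitz in `z`, with derivative
`∂_z K` of modulus at most `1` off the diagonal, so dominated differentiation gives
`φ' = ∫₀^∞ ∂_z K(·, z) ω` and the bound on `φ'` for every integrable `ω`.
For the equation, splitting the exponentials writes `φ` through the Volterra integrals
`I_β(z) = ∫₀^z e^{β(z-y)} ω(y) dy`, which satisfy `I_β' = β I_β + ω` when `ω` is continuous.
-/

open MeasureTheory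

open Real Set Filter Topology

theorem abs_exp_sub_exp_le {s t M : ℝ} (hs : s ≤ M) (ht : t ≤ M) :
    |exp s - exp t| ≤ exp M * |s - t| := by
  simpa only [Real.norm_eq_abs] using (convex_Iic M).norm_image_sub_le_of_norm_hasDerivWithin_le
    (fun x _ => (hasDerivAt_exp x).hasDerivWithinAt)
    (fun x hx => by simpa only [Real.norm_eq_abs, abs_exp] using exp_le_exp.2 hx) ht hs

theorem integral_Ioi_eq_intervalIntegral_add_integral_Ioi {f : ℝ → ℝ} {a b : ℝ} (hab : a ≤ b)
    (hf : IntegrableOn f (Ioi a)) :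
    ∫ x in Ioi a, f x = (∫ x in a..b, f x) + ∫ x in Ioi b, f x := by
  rw [intervalIntegral.integral_of_le hab, ← setIntegral_union (Ioc_disjoint_Ioi le_rfl)
    measurableSet_Ioi (hf.mono_set Ioc_subset_Ioi_self) (hf.mono_set (Ioi_subset_Ioi hab)),
    Ioc_union_Ioi_eq_Ioi hab]

theorem abs_setIntegral_mul_le {X : Type*} [MeasurableSpace X] {μ : Measure X} {s : Set X}
    {k ω : X → ℝ} {C : ℝ} (hs : MeasurableSet s) (hω : IntegrableOn ω s μ)
    (hk : ∀ x ∈ s, |k x| ≤ C) :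
    |∫ x in s, k x * ω x ∂μ| ≤ C * ∫ x in s, |ω x| ∂μ := by
  rw [← integral_const_mul, ← Real.norm_eq_abs]
  refine norm_integral_le_of_norm_le (hω.norm.const_mul C) ((ae_restrict_iff' hs).2 ?_)
  refine ae_of_all _ fun x hx => ?_
  rw [norm_mul, Real.norm_eq_abs, Real.norm_eq_abs]
  exact mul_le_mul_of_nonneg_right (hk x hx) (abs_nonneg _)

theorem norm_deriv_le_of_hasDerivWithinAt {F : Type*} [NormedAddCommGroup F] [NormedSpace ℝ F]
    {f : ℝ → F} {f' : F} {s : Set ℝ} {x C : ℝ} (hs : UniqueDiffWithinAt ℝ s x)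
    (hf : HasDerivWithinAt f f' s x) (hC : ‖f'‖ ≤ C) : ‖deriv f x‖ ≤ C := by
  by_cases hd : DifferentiableAt ℝ f x
  · rwa [← hd.derivWithin hs, hf.derivWithin hs]
  · rw [deriv_zero_of_not_differentiableAt hd, norm_zero]
    exact (norm_nonneg _).trans hC

theorem exp_neg_mul_le_one {α t : ℝ} (hα : 0 ≤ α) (ht : 0 ≤ t) : exp (-α * t) ≤ 1 :=
  exp_le_one_iff.2 (by nlinarith)

section GreenKernel

variable {α y z : ℝ}

/-- `G₋(y, z)` for `y ≤ z` and `G₊(y, z)` for `z ≤ y`. -/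
noncomputable def greenKernel (α y z : ℝ) : ℝ :=
  -(1 / (2 * α)) * (exp (-α * |z - y|) - exp (-α * (y + z)))

noncomputable def greenKernelDeriv (α y z : ℝ) : ℝ :=
  ((if y ≤ z then 1 else -1) * exp (-α * |z - y|) - exp (-α * (y + z))) / 2

theorem continuous_greenKernel (α z : ℝ) : Continuous fun y => greenKernel α y z := by
  unfold greenKernel
  fun_prop

theorem measurable_greenKernelDeriv (α z : ℝ) : Measurable fun y => greenKernelDeriv α y z := by
  unfold greenKernelDeriv
  exact ((Measurable.ite measurableSet_Iic measurable_const measurable_const).mul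
    (by fun_prop)).sub (by fun_prop) |>.div_const 2

theorem abs_greenKernel_le (hα : 0 < α) (hy : 0 ≤ y) (hz : 0 ≤ z) :
    |greenKernel α y z| ≤ 1 / (2 * α) := by
  have hdiff : |exp (-α * |z - y|) - exp (-α * (y + z))| ≤ 1 :=
    abs_sub_le_of_nonneg_of_le (exp_pos _).le (exp_neg_mul_le_one hα.le (abs_nonneg _))
      (exp_pos _).le (exp_neg_mul_le_one hα.le (by linarith))
  rw [greenKernel, abs_mul, abs_neg, abs_of_pos (by positivity)]
  exact mul_le_of_le_one_right (by positivity) hdiff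

theorem abs_greenKernelDeriv_le (hα : 0 ≤ α) (hy : 0 ≤ y) (hz : 0 ≤ z) :
    |greenKernelDeriv α y z| ≤ 1 := by
  have hsign : |(if y ≤ z then 1 else -1 : ℝ)| = 1 := by split_ifs <;> simp
  have h₁ := exp_neg_mul_le_one hα (abs_nonneg (z - y))
  have h₂ := exp_neg_mul_le_one hα (show 0 ≤ y + z by linarith)
  rw [greenKernelDeriv, abs_div, abs_two, div_le_one two_pos]
  calc _ ≤ |(if y ≤ z then 1 else -1 : ℝ) * exp (-α * |z - y|)| + |exp (-α * (y + z))| :=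
        abs_sub _ _
    _ ≤ 2 := by rw [abs_mul, hsign, one_mul, abs_exp, abs_exp]; linarith

theorem abs_greenKernel_sub_le (hα : 0 < α) (hy : 0 ≤ y) {z₁ z₂ : ℝ} (hz₁ : -1 ≤ z₁)
    (hz₂ : -1 ≤ z₂) :
    |greenKernel α y z₁ - greenKernel α y z₂| ≤ (1 + exp α) / 2 * |z₁ - z₂| := by
  have hnear : |exp (-α * |z₁ - y|) - exp (-α * |z₂ - y|)| ≤ α * |z₁ - z₂| := by
    refine (abs_exp_sub_exp_le (M := 0) (by nlinarith [abs_nonneg (z₁ - y)])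
      (by nlinarith [abs_nonneg (z₂ - y)])).trans ?_
    rw [exp_zero, one_mul, ← mul_sub, abs_mul, abs_neg, abs_of_pos hα]
    exact mul_le_mul_of_nonneg_left
      (by simpa using abs_abs_sub_abs_le_abs_sub (z₁ - y) (z₂ - y)) hα.le
  have hreflected : |exp (-α * (y + z₁)) - exp (-α * (y + z₂))| ≤ exp α * (α * |z₁ - z₂|) := by
    refine (abs_exp_sub_exp_le (M := α) (by nlinarith) (by nlinarith)).trans_eq ?_
    rw [← mul_sub, abs_mul, abs_neg, abs_of_pos hα]
    ring_nf
  calc |greenKernel α y z₁ - greenKernel α y z₂|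
      = 1 / (2 * α) * |(exp (-α * |z₁ - y|) - exp (-α * |z₂ - y|))
          - (exp (-α * (y + z₁)) - exp (-α * (y + z₂)))| := by
        rw [greenKernel, greenKernel, ← mul_sub, abs_mul, abs_neg, abs_of_pos (by positivity)]
        ring_nf
    _ ≤ 1 / (2 * α) * (α * |z₁ - z₂| + exp α * (α * |z₁ - z₂|)) := by
        gcongr
        exact (abs_sub _ _).trans (add_le_add hnear hreflected)
    _ = (1 + exp α) / 2 * |z₁ - z₂| := by field_simp

theorem hasDerivAt_greenKernel (hα : α ≠ 0) (hzy : z ≠ y) :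
    HasDerivAt (greenKernel α y) (greenKernelDeriv α y z) z := by
  have hsign : (SignType.sign (z - y) : ℝ) = if y ≤ z then 1 else -1 := by
    rcases hzy.lt_or_gt with h | h
    · simp [sign_neg (sub_neg.2 h), h.not_ge]
    · simp [sign_pos (sub_pos.2 h), h.le]
  have hdist : HasDerivAt (fun w => |w - y|) (SignType.sign (z - y) : ℝ) z :=
    (hasDerivAt_abs (sub_ne_zero.2 hzy)).comp_sub_const z y
  have hsum : HasDerivAt (fun w => y + w) 1 z := (hasDerivAt_id z).const_add y
  refine (((hdist.const_mul (-α)).exp.sub (hsum.const_mul (-α)).exp).const_mul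
    (-(1 / (2 * α)))).congr_deriv ?_
  rw [greenKernelDeriv, hsign]
  field_simp
  ring

end GreenKernel

section GreenPotential

variable {α z : ℝ} {ω : ℝ → ℝ}

theorem integrableOn_greenKernel_mul (hα : 0 < α) (hω : IntegrableOn ω (Ioi 0)) (hz : 0 ≤ z) :
    IntegrableOn (fun y => greenKernel α y z * ω y) (Ioi 0) :=
  hω.bdd_mul (continuous_greenKernel α z).aestronglyMeasurable
    ((ae_restrict_iff' measurableSet_Ioi).2 (ae_of_all _ fun _ hy => abs_greenKernel_le hα
      (le_of_lt hy) hz))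

theorem hasDerivAt_integral_greenKernel_mul (hα : 0 < α) (hω : IntegrableOn ω (Ioi 0))
    (hz : 0 ≤ z) :
    HasDerivAt (fun w => ∫ y in Ioi 0, greenKernel α y w * ω y)
      (∫ y in Ioi 0, greenKernelDeriv α y z * ω y) z := by
  have hlip : ∀ y ∈ Ioi (0 : ℝ), LipschitzOnWith (Real.nnabs ((1 + exp α) / 2 * |ω y|))
      (fun w => greenKernel α y w * ω y) (Ioi (-1)) := fun y hy =>
    LipschitzOnWith.of_dist_le_mul fun z₁ hz₁ z₂ hz₂ => by
      rw [Real.dist_eq, Real.dist_eq, Real.coe_nnabs, ← sub_mul, abs_mul, abs_mul, abs_abs,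
        abs_of_pos (by positivity : 0 < (1 + exp α) / 2), mul_right_comm]
      exact mul_le_mul_of_nonneg_right
        (abs_greenKernel_sub_le hα (le_of_lt hy) (le_of_lt hz₁) (le_of_lt hz₂)) (abs_nonneg _)
  refine (hasDerivAt_integral_of_dominated_loc_of_lip (Ioi_mem_nhds (by linarith : (-1 : ℝ) < z))
    (Eventually.of_forall fun w =>
      (continuous_greenKernel α w).aestronglyMeasurable.mul hω.aestronglyMeasurable)
    (integrableOn_greenKernel_mul hα hω hz)
    ((measurable_greenKernelDeriv α z).aestronglyMeasurable.mul hω.aestronglyMeasurable)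
    ((ae_restrict_iff' measurableSet_Ioi).2 (ae_of_all _ hlip))
    (hω.norm.const_mul _) ?_).2
  filter_upwards [ae_restrict_of_ae (Measure.ae_ne volume z)] with y hy
  exact (hasDerivAt_greenKernel hα.ne' hy.symm).mul_const (ω y)

/-- The function `φ` of the statement. -/
noncomputable def greenPotential (α : ℝ) (ω : ℝ → ℝ) (z : ℝ) : ℝ :=
  (∫ y in (0 : ℝ)..z,
    (-(1 / (2 * α)) * (exp (-α * (z - y)) - exp (-α * (y + z)))) * ω y) +
  ∫ y in Ioi z, (-(1 / (2 * α)) * (exp (α * (z - y)) - exp (-α * (y + z)))) * ω y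

theorem greenPotential_zero (α : ℝ) (ω : ℝ → ℝ) : greenPotential α ω 0 = 0 := by
  simp [greenPotential]

theorem greenPotential_eq_integral_greenKernel (hα : 0 < α) (hω : IntegrableOn ω (Ioi 0))
    (hz : 0 ≤ z) : greenPotential α ω z = ∫ y in Ioi 0, greenKernel α y z * ω y := by
  rw [integral_Ioi_eq_intervalIntegral_add_integral_Ioi hz (integrableOn_greenKernel_mul hα hω hz),
    greenPotential]
  congr 1
  · refine intervalIntegral.integral_congr fun y hy => ?_
    rw [uIcc_of_le hz] at hy
    simp only [greenKernel, abs_of_nonneg (sub_nonneg.2 hy.2)]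
  · refine setIntegral_congr_fun measurableSet_Ioi fun y hy => ?_
    simp only [greenKernel, abs_of_neg (sub_neg.2 (mem_Ioi.1 hy))]
    ring_nf

theorem abs_mul_greenPotential_le (hα : 0 < α) (hω : IntegrableOn ω (Ioi 0)) (hz : 0 ≤ z) :
    |α * greenPotential α ω z| ≤ ∫ y in Ioi 0, |ω y| := by
  have hbound := abs_setIntegral_mul_le measurableSet_Ioi hω fun y hy =>
    abs_greenKernel_le hα (le_of_lt hy) hz
  have hL1 : 0 ≤ ∫ y in Ioi 0, |ω y| := setIntegral_nonneg measurableSet_Ioi fun _ _ => abs_nonneg _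
  rw [greenPotential_eq_integral_greenKernel hα hω hz, abs_mul, abs_of_pos hα]
  calc α * |∫ y in Ioi 0, greenKernel α y z * ω y|
      ≤ α * (1 / (2 * α) * ∫ y in Ioi 0, |ω y|) := by gcongr
    _ = (∫ y in Ioi 0, |ω y|) / 2 := by field_simp
    _ ≤ ∫ y in Ioi 0, |ω y| := by linarith

theorem abs_deriv_greenPotential_le (hα : 0 < α) (hω : IntegrableOn ω (Ioi 0)) (hz : 0 ≤ z) :
    |deriv (greenPotential α ω) z| ≤ ∫ y in Ioi 0, |ω y| := by
  -- Only on `[0, ∞)` is `greenPotential` the kernel integral, so at `z = 0` we only get a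
  -- one-sided derivative; a two-sided one, if it exists, must agree with it.
  have hderiv : HasDerivWithinAt (greenPotential α ω)
      (∫ y in Ioi 0, greenKernelDeriv α y z * ω y) (Ici 0) z :=
    (hasDerivAt_integral_greenKernel_mul hα hω hz).hasDerivWithinAt.congr
      (fun _ hw => greenPotential_eq_integral_greenKernel hα hω hw)
      (greenPotential_eq_integral_greenKernel hα hω hz)
  refine norm_deriv_le_of_hasDerivWithinAt (uniqueDiffOn_Ici 0 z hz) hderiv ?_
  simpa using abs_setIntegral_mul_le measurableSet_Ioi hω fun y hy =>
    abs_greenKernelDeriv_le hα.le (le_of_lt hy) hz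

end GreenPotential

section VariationOfConstants

variable {α β z : ℝ} {ω : ℝ → ℝ}

noncomputable def expConv (β : ℝ) (ω : ℝ → ℝ) (z : ℝ) : ℝ :=
  ∫ y in (0 : ℝ)..z, exp (β * (z - y)) * ω y

theorem hasDerivAt_expConv (hω : Continuous ω) (β z : ℝ) :
    HasDerivAt (expConv β ω) (β * expConv β ω z + ω z) z := by
  have hfactor : expConv β ω = fun w => exp (β * w) * ∫ y in (0 : ℝ)..w, exp (-(β * y)) * ω y := by
    funext w
    rw [expConv, ← intervalIntegral.integral_const_mul]
    congr 1 with y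
    rw [← mul_assoc, ← exp_add]
    ring_nf
  have hprim : HasDerivAt (fun w => ∫ y in (0 : ℝ)..w, exp (-(β * y)) * ω y)
      (exp (-(β * z)) * ω z) z :=
    ((by fun_prop : Continuous fun y => exp (-(β * y)) * ω y).integral_hasStrictDerivAt
      0 z).hasDerivAt
  rw [hfactor]
  refine ((hasDerivAt_id' z |>.const_mul β).exp.mul hprim).congr_deriv ?_
  have hinv : exp (β * z) * exp (-(β * z)) = 1 := by rw [← exp_add, add_neg_cancel, exp_zero]
  dsimp only
  linear_combination ω z * hinv

noncomputable def variationOfConstants (α E : ℝ) (ω : ℝ → ℝ) (z : ℝ) : ℝ :=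
  -(expConv (-α) ω z - expConv α ω z + 2 * sinh (α * z) * E) / (2 * α)

theorem hasDerivAt_variationOfConstants (hα : α ≠ 0) (hω : Continuous ω) (E z : ℝ) :
    HasDerivAt (variationOfConstants α E ω)
      ((expConv (-α) ω z + expConv α ω z) / 2 - cosh (α * z) * E) z := by
  refine ((((hasDerivAt_expConv hω (-α) z).sub (hasDerivAt_expConv hω α z)).add
    (((hasDerivAt_id' z |>.const_mul α).sinh.const_mul 2).mul_const E)).neg.div_const
    (2 * α)).congr_deriv ?_
  field_simp
  ring

theorem deriv_deriv_variationOfConstants_sub (hα : α ≠ 0) (hω : Continuous ω) (E z : ℝ) :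
    deriv (deriv (variationOfConstants α E ω)) z - α ^ 2 * variationOfConstants α E ω z = ω z := by
  have hfirst : deriv (variationOfConstants α E ω) =
      fun w => (expConv (-α) ω w + expConv α ω w) / 2 - cosh (α * w) * E :=
    funext fun w => (hasDerivAt_variationOfConstants hα hω E w).deriv
  have hsecond : HasDerivAt
      (fun w => (expConv (-α) ω w + expConv α ω w) / 2 - cosh (α * w) * E)
      ((-α * expConv (-α) ω z + ω z + (α * expConv α ω z + ω z)) / 2 -
        sinh (α * z) * (α * 1) * E) z :=
    (((hasDerivAt_expConv hω (-α) z).add (hasDerivAt_expConv hω α z)).div_const 2).sub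
      ((hasDerivAt_id' z |>.const_mul α).cosh.mul_const E)
  rw [hfirst, hsecond.deriv, variationOfConstants]
  field_simp
  ring

theorem greenPotential_eq_variationOfConstants (hα : 0 ≤ α) (hω : IntegrableOn ω (Ioi 0))
    (hz : 0 ≤ z) :
    greenPotential α ω z =
      variationOfConstants α (∫ y in Ioi 0, exp (-α * y) * ω y) ω z := by
  have hω₀z : IntervalIntegrable ω volume 0 z :=
    (intervalIntegrable_iff_integrableOn_Ioc_of_le hz).2 (hω.mono_set Ioc_subset_Ioi_self)
  have hexpConv (β : ℝ) : IntervalIntegrable (fun y => exp (β * (z - y)) * ω y) volume 0 z :=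
    hω₀z.continuousOn_mul (by fun_prop)
  have hdecay : IntegrableOn (fun y => exp (-α * y) * ω y) (Ioi 0) :=
    hω.bdd_mul (by fun_prop : Continuous fun y => exp (-α * y)).aestronglyMeasurable
      ((ae_restrict_iff' measurableSet_Ioi).2 (ae_of_all _ fun y hy => by
        rw [Real.norm_eq_abs, abs_exp]; exact exp_neg_mul_le_one hα (le_of_lt hy)))
  have hhead : ∫ y in (0 : ℝ)..z,
      (-(1 / (2 * α)) * (exp (-α * (z - y)) - exp (-α * (y + z)))) * ω y =
      -(1 / (2 * α)) * (expConv (-α) ω z - exp (-α * z) ^ 2 * expConv α ω z) := by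
    rw [expConv, expConv, ← intervalIntegral.integral_const_mul, ← intervalIntegral.integral_sub
      (hexpConv _) ((hexpConv _).const_mul _), ← intervalIntegral.integral_const_mul]
    congr 1 with y
    simp only [mul_sub, mul_add, neg_mul, exp_sub, exp_add, exp_neg]
    field_simp
  have htail : ∫ y in Ioi z, (-(1 / (2 * α)) * (exp (α * (z - y)) - exp (-α * (y + z)))) * ω y =
      -(1 / (2 * α)) * (2 * sinh (α * z)) * ∫ y in Ioi z, exp (-α * y) * ω y := by
    rw [← integral_const_mul]
    congr 1 with y
    simp only [sinh_eq, mul_sub, mul_add, neg_mul, exp_sub, exp_add, exp_neg]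
    field_simp
    ring
  have hdecayHead : ∫ y in (0 : ℝ)..z, exp (-α * y) * ω y = exp (-α * z) * expConv α ω z := by
    rw [expConv, ← intervalIntegral.integral_const_mul]
    congr 1 with y
    simp only [mul_sub, neg_mul, exp_sub, exp_neg]
    field_simp
  have hsplit : ∫ y in Ioi z, exp (-α * y) * ω y =
      (∫ y in Ioi 0, exp (-α * y) * ω y) - exp (-α * z) * expConv α ω z := by
    rw [integral_Ioi_eq_intervalIntegral_add_integral_Ioi hz hdecay, hdecayHead]
    ring
  rw [greenPotential, hhead, htail, hsplit, variationOfConstants]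
  simp only [sinh_eq, neg_mul, exp_neg]
  field_simp
  ring

theorem deriv_deriv_greenPotential_sub (hα : 0 < α) (hω : IntegrableOn ω (Ioi 0))
    (hc : Continuous ω) (hz : 0 < z) :
    deriv (deriv (greenPotential α ω)) z - α ^ 2 * greenPotential α ω z = ω z := by
  have hEq : greenPotential α ω =ᶠ[𝓝 z]
      variationOfConstants α (∫ y in Ioi 0, exp (-α * y) * ω y) ω :=
    eventually_of_mem (Ioi_mem_nhds hz) fun w hw =>
      greenPotential_eq_variationOfConstants hα.le hω (le_of_lt hw)
  rw [hEq.deriv.deriv_eq, hEq.eq_of_nhds]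
  exact deriv_deriv_variationOfConstants_sub hα.ne' hc _ z

end VariationOfConstants

/-- One-dimensional elliptic estimate: the Green's function representation of
the solution to `φ'' - α²φ = ω` on `(0,∞)` with `φ(0) = 0` satisfies
`|αφ| ≤ ‖ω‖_{L¹}` and `|φ'| ≤ ‖ω‖_{L¹}`, and solves the equation when `ω` is
continuous. -/
theorem laplace_mode_estimate (α : ℝ) (hα : 0 < α) (ω : ℝ → ℝ)
    (hω : IntegrableOn ω (Set.Ioi 0)) (φ : ℝ → ℝ)
    (hφ : ∀ z : ℝ, φ z =
      (∫ y in (0 : ℝ)..z,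
        (-(1 / (2 * α)) * (Real.exp (-α * (z - y)) - Real.exp (-α * (y + z)))) * ω y) +
      ∫ y in Set.Ioi z,
        (-(1 / (2 * α)) * (Real.exp (α * (z - y)) - Real.exp (-α * (y + z)))) * ω y) :
    φ 0 = 0 ∧
    (∀ z : ℝ, 0 ≤ z → |α * φ z| ≤ ∫ y in Set.Ioi (0 : ℝ), |ω y|) ∧
    (∀ z : ℝ, 0 ≤ z → |deriv φ z| ≤ ∫ y in Set.Ioi (0 : ℝ), |ω y|) ∧
    (Continuous ω → ∀ z : ℝ, 0 < z →
      deriv (deriv φ) z - α ^ 2 * φ z = ω z) := by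
  obtain rfl : φ = greenPotential α ω := funext hφ
  exact ⟨greenPotential_zero α ω,
    fun _ hz => abs_mul_greenPotential_le hα hω hz,
    fun _ hz => abs_deriv_greenPotential_le hα hω hz,
    fun hc _ hz => deriv_deriv_greenPotential_sub hα hω hc hz⟩
end
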